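/- Assume v² − 4f²m_l² > 0 and M₂²·(1 + h²/(2f²)) − M² > 0. Set K := (v² − 4f²m_l²)·M₂² / (8f⁴·(M₂²·(1 + h²/(2f²)) − M²)) (so K > 0). Then the parity-preserving point P′ = (l = l′ = √K, δ = δ′ = −v/(4f²), δbar = δbar′ = −f·M·K/M₂²) is a critical point of V₁ (all six partial derivatives of V₁ vanish at P′), and the value of the potential there is V₁(P′) = −2·(f²·(1 − M²/M₂²) + h²/2)·K². -/

import Mathlib

/-!
`V₁` is quadratic in `δ` and `δbar`, so their stationarity equations are solved by
`δ = -v/(4f²)` and `δbar = -fMl²/M₂²`. `V₁` is even in `l` with `∂V₁/∂l = 2l·(…)`, and after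
substituting these values and `l² = l'² = K` the bracket is affine in `K`; the given `K` is its zero.
The primed equations follow from the symmetry of `V₁` under swapping primed and unprimed fields.
For the value, use the bracket relation to eliminate `m_l²`.
-/

/-- The simplified tree-level Higgs potential of the minimal SUSY left-right model in
the limit of small gauge and bidoublet couplings, with all fields real:
`V₁(l, l', δ, δ', δbar, δbar') = m_l²(l'² + l²) + M₂²(δbar'² + δbar²) + f²(l'⁴ + l⁴)
 + 4f²(l'²δ'² + l²δ²) + h²l'²l² + 2v(l'²δ' + l²δ) + 2fM(l'²δbar' + l²δbar)`. -/
noncomputable def V1 (mlsq M2 f M v h : ℝ) (l l' δ δ' δbar δbar' : ℝ) : ℝ :=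
  mlsq * (l' ^ 2 + l ^ 2) + M2 ^ 2 * (δbar' ^ 2 + δbar ^ 2) + f ^ 2 * (l' ^ 4 + l ^ 4)
  + 4 * f ^ 2 * (l' ^ 2 * δ' ^ 2 + l ^ 2 * δ ^ 2) + h ^ 2 * l' ^ 2 * l ^ 2
  + 2 * v * (l' ^ 2 * δ' + l ^ 2 * δ) + 2 * f * M * (l' ^ 2 * δbar' + l ^ 2 * δbar)

theorem hasDerivAt_quadratic (a b c x : ℝ) :
    HasDerivAt (fun y => a * y ^ 2 + b * y + c) (2 * a * x + b) x := by
  simpa [mul_comm, mul_left_comm] using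
    (((hasDerivAt_pow 2 x).const_mul a).add ((hasDerivAt_id x).const_mul b)).add_const c

theorem hasDerivAt_evenQuartic (a b c x : ℝ) :
    HasDerivAt (fun y => a * y ^ 4 + b * y ^ 2 + c) (4 * a * x ^ 3 + 2 * b * x) x := by
  simpa [mul_comm, mul_left_comm] using
    (((hasDerivAt_pow 4 x).const_mul a).add ((hasDerivAt_pow 2 x).const_mul b)).add_const c

section Potential

variable (mlsq M2 f M v h : ℝ)

theorem V1_swap (l l' δ δ' δbar δbar' : ℝ) :
    V1 mlsq M2 f M v h l l' δ δ' δbar δbar' = V1 mlsq M2 f M v h l' l δ' δ δbar' δbar := by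
  unfold V1; ring

theorem hasDerivAt_V1_l (l l' δ δ' δbar δbar' : ℝ) :
    HasDerivAt (fun x => V1 mlsq M2 f M v h x l' δ δ' δbar δbar')
      (2 * l * (mlsq + 2 * f ^ 2 * l ^ 2 + 4 * f ^ 2 * δ ^ 2 + h ^ 2 * l' ^ 2 + 2 * v * δ
        + 2 * f * M * δbar)) l := by
  have e : (fun x => V1 mlsq M2 f M v h x l' δ δ' δbar δbar') = fun x => f ^ 2 * x ^ 4
      + (mlsq + 4 * f ^ 2 * δ ^ 2 + h ^ 2 * l' ^ 2 + 2 * v * δ + 2 * f * M * δbar) * x ^ 2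
      + V1 mlsq M2 f M v h 0 l' δ δ' δbar δbar' := by
    funext x; unfold V1; ring
  rw [e]
  exact (hasDerivAt_evenQuartic _ _ _ l).congr_deriv (by ring)

theorem hasDerivAt_V1_δ (l l' δ δ' δbar δbar' : ℝ) :
    HasDerivAt (fun x => V1 mlsq M2 f M v h l l' x δ' δbar δbar')
      (2 * l ^ 2 * (4 * f ^ 2 * δ + v)) δ := by
  have e : (fun x => V1 mlsq M2 f M v h l l' x δ' δbar δbar') = fun x =>
      4 * f ^ 2 * l ^ 2 * x ^ 2 + 2 * v * l ^ 2 * x + V1 mlsq M2 f M v h l l' 0 δ' δbar δbar' := by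
    funext x; unfold V1; ring
  rw [e]
  exact (hasDerivAt_quadratic _ _ _ δ).congr_deriv (by ring)

theorem hasDerivAt_V1_δbar (l l' δ δ' δbar δbar' : ℝ) :
    HasDerivAt (fun x => V1 mlsq M2 f M v h l l' δ δ' x δbar')
      (2 * (M2 ^ 2 * δbar + f * M * l ^ 2)) δbar := by
  have e : (fun x => V1 mlsq M2 f M v h l l' δ δ' x δbar') = fun x =>
      M2 ^ 2 * x ^ 2 + 2 * f * M * l ^ 2 * x + V1 mlsq M2 f M v h l l' δ δ' 0 δbar' := by
    funext x; unfold V1; ring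
  rw [e]
  exact (hasDerivAt_quadratic _ _ _ δbar).congr_deriv (by ring)

theorem hasDerivAt_V1_l' (l l' δ δ' δbar δbar' : ℝ) :
    HasDerivAt (fun x => V1 mlsq M2 f M v h l x δ δ' δbar δbar')
      (2 * l' * (mlsq + 2 * f ^ 2 * l' ^ 2 + 4 * f ^ 2 * δ' ^ 2 + h ^ 2 * l ^ 2 + 2 * v * δ'
        + 2 * f * M * δbar')) l' := by
  simpa only [V1_swap _ _ _ _ _ _ _ l] using hasDerivAt_V1_l mlsq M2 f M v h l' l δ' δ δbar' δbar

theorem hasDerivAt_V1_δ' (l l' δ δ' δbar δbar' : ℝ) :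
    HasDerivAt (fun x => V1 mlsq M2 f M v h l l' δ x δbar δbar')
      (2 * l' ^ 2 * (4 * f ^ 2 * δ' + v)) δ' := by
  simpa only [V1_swap _ _ _ _ _ _ l] using hasDerivAt_V1_δ mlsq M2 f M v h l' l δ' δ δbar' δbar

theorem hasDerivAt_V1_δbar' (l l' δ δ' δbar δbar' : ℝ) :
    HasDerivAt (fun x => V1 mlsq M2 f M v h l l' δ δ' δbar x)
      (2 * (M2 ^ 2 * δbar' + f * M * l' ^ 2)) δbar' := by
  simpa only [V1_swap _ _ _ _ _ _ l] using hasDerivAt_V1_δbar mlsq M2 f M v h l' l δ' δ δbar' δbar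

end Potential

theorem l_stationarity_of_eq_K (mlsq M2 f M v h K : ℝ) (hf : f ≠ 0) (hM2 : M2 ≠ 0)
    (hMM : M2 ^ 2 * (1 + h ^ 2 / (2 * f ^ 2)) - M ^ 2 ≠ 0)
    (hK : K = (v ^ 2 - 4 * f ^ 2 * mlsq) * M2 ^ 2 /
      (8 * f ^ 4 * (M2 ^ 2 * (1 + h ^ 2 / (2 * f ^ 2)) - M ^ 2))) :
    mlsq + 2 * f ^ 2 * K + 4 * f ^ 2 * (-v / (4 * f ^ 2)) ^ 2 + h ^ 2 * K
      + 2 * v * (-v / (4 * f ^ 2)) + 2 * f * M * (-f * M * K / M2 ^ 2) = 0 := by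
  have hKA : K * (8 * f ^ 4 * (M2 ^ 2 * (1 + h ^ 2 / (2 * f ^ 2)) - M ^ 2))
      = (v ^ 2 - 4 * f ^ 2 * mlsq) * M2 ^ 2 := by
    rw [hK]
    exact div_mul_cancel₀ _ (mul_ne_zero (by positivity) hMM)
  field_simp at hKA ⊢
  linear_combination hKA / 2

/-- The parity-preserving solution: under `v² − 4f²m_l² > 0` and
`M₂²(1 + h²/(2f²)) − M² > 0`, with
`K = (v² − 4f²m_l²)M₂²/(8f⁴(M₂²(1 + h²/(2f²)) − M²))`, the point
`(l, l', δ, δ', δbar, δbar') = (√K, √K, −v/(4f²), −v/(4f²), −fMK/M₂², −fMK/M₂²)` is a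
critical point of `V₁` and `V₁ = −2(f²(1 − M²/M₂²) + h²/2)K²` there. -/
theorem parity_preserving_solution (mlsq M2 f M v h K : ℝ)
    (hf : f ≠ 0) (hM2 : 0 < M2)
    (hpos : 0 < v ^ 2 - 4 * f ^ 2 * mlsq)
    (hMM : 0 < M2 ^ 2 * (1 + h ^ 2 / (2 * f ^ 2)) - M ^ 2)
    (hK : K = (v ^ 2 - 4 * f ^ 2 * mlsq) * M2 ^ 2 /
      (8 * f ^ 4 * (M2 ^ 2 * (1 + h ^ 2 / (2 * f ^ 2)) - M ^ 2))) :
    0 < K ∧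
    deriv (fun x => V1 mlsq M2 f M v h x (Real.sqrt K) (-v / (4 * f ^ 2))
      (-v / (4 * f ^ 2)) (-f * M * K / M2 ^ 2) (-f * M * K / M2 ^ 2)) (Real.sqrt K) = 0 ∧
    deriv (fun x => V1 mlsq M2 f M v h (Real.sqrt K) x (-v / (4 * f ^ 2))
      (-v / (4 * f ^ 2)) (-f * M * K / M2 ^ 2) (-f * M * K / M2 ^ 2)) (Real.sqrt K) = 0 ∧
    deriv (fun x => V1 mlsq M2 f M v h (Real.sqrt K) (Real.sqrt K) x
      (-v / (4 * f ^ 2)) (-f * M * K / M2 ^ 2) (-f * M * K / M2 ^ 2))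
      (-v / (4 * f ^ 2)) = 0 ∧
    deriv (fun x => V1 mlsq M2 f M v h (Real.sqrt K) (Real.sqrt K) (-v / (4 * f ^ 2))
      x (-f * M * K / M2 ^ 2) (-f * M * K / M2 ^ 2)) (-v / (4 * f ^ 2)) = 0 ∧
    deriv (fun x => V1 mlsq M2 f M v h (Real.sqrt K) (Real.sqrt K) (-v / (4 * f ^ 2))
      (-v / (4 * f ^ 2)) x (-f * M * K / M2 ^ 2)) (-f * M * K / M2 ^ 2) = 0 ∧
    deriv (fun x => V1 mlsq M2 f M v h (Real.sqrt K) (Real.sqrt K) (-v / (4 * f ^ 2))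
      (-v / (4 * f ^ 2)) (-f * M * K / M2 ^ 2) x) (-f * M * K / M2 ^ 2) = 0 ∧
    V1 mlsq M2 f M v h (Real.sqrt K) (Real.sqrt K) (-v / (4 * f ^ 2))
      (-v / (4 * f ^ 2)) (-f * M * K / M2 ^ 2) (-f * M * K / M2 ^ 2)
      = -2 * (f ^ 2 * (1 - M ^ 2 / M2 ^ 2) + h ^ 2 / 2) * K ^ 2 := by
  have hK0 : 0 < K := by rw [hK]; positivity
  have hl := l_stationarity_of_eq_K mlsq M2 f M v h K hf hM2.ne' hMM.ne' hK
  set s := Real.sqrt K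
  set δ₀ := -v / (4 * f ^ 2)
  set δbar₀ := -f * M * K / M2 ^ 2
  have hs : s ^ 2 = K := Real.sq_sqrt hK0.le
  have hδ : 4 * f ^ 2 * δ₀ + v = 0 := by simp only [δ₀]; field_simp; ring
  have hδbar : M2 ^ 2 * δbar₀ + f * M * K = 0 := by simp only [δbar₀]; field_simp; ring
  have hδbar_sq : M2 ^ 2 * δbar₀ ^ 2 = f ^ 2 * M ^ 2 * K ^ 2 / M2 ^ 2 := by
    simp only [δbar₀]; field_simp
  refine ⟨hK0, ?_, ?_, ?_, ?_, ?_, ?_, ?_⟩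
  · rw [(hasDerivAt_V1_l ..).deriv, hs, hl, mul_zero]
  · rw [(hasDerivAt_V1_l' ..).deriv, hs, hl, mul_zero]
  · rw [(hasDerivAt_V1_δ ..).deriv, hδ, mul_zero]
  · rw [(hasDerivAt_V1_δ' ..).deriv, hδ, mul_zero]
  · rw [(hasDerivAt_V1_δbar ..).deriv, hs, hδbar, mul_zero]
  · rw [(hasDerivAt_V1_δbar' ..).deriv, hs, hδbar, mul_zero]
  · unfold V1
    rw [show s ^ 4 = (s ^ 2) ^ 2 by ring, hs]
    linear_combination 2 * K * hl + 2 * hδbar_sq
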